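/- Let Δ be a connected simplicial complex that is not a cone, with s ≥ 4 facets, admitting a Berge cycle of length s but no Berge cycle of length k for any 3 ≤ k ≤ s−1. Then the line graph of Δ is a cycle graph of length s. -/

import Mathlib

/-- The line graph of the complex with facets `F i`: facets are adjacent iff they
are distinct and intersect. -/
def lineGraph {n s : ℕ} (F : Fin s → Finset (Fin n)) : SimpleGraph (Fin s) where
  Adj i j := i ≠ j ∧ (F i ∩ F j).Nonempty
  symm := by
    constructor
    intro i j h
    exact ⟨h.1.symm, by rw [Finset.inter_comm]; exact h.2⟩
  loopless := by constructor; intro i h; exact h.1 rfl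

/-- The complex with facets `F i` admits a Berge cycle of length `m`: an alternating
sequence of `m` distinct vertices and `m` distinct facets
`v 0, G 0, v 1, G 1, …, v (m-1), G (m-1), v 0` with `v i, v (i+1) ∈ G i`. -/
def HasBergeCycle {n s : ℕ} (F : Fin s → Finset (Fin n)) (m : ℕ) : Prop :=
  ∃ (v : Fin m → Fin n) (ι : Fin m → Fin s),
    Function.Injective v ∧ Function.Injective ι ∧
    ∀ i : Fin m, v i ∈ F (ι i) ∧ v ⟨(i.val + 1) % m, Nat.mod_lt _ i.pos⟩ ∈ F (ι i)

/-- A Berge cycle: a Berge cycle in which no facet of the sequence contains more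
than two of the connecting vertices. -/
def HasSpecialCycle {n s : ℕ} (F : Fin s → Finset (Fin n)) (m : ℕ) : Prop :=
  ∃ (v : Fin m → Fin n) (ι : Fin m → Fin s),
    Function.Injective v ∧ Function.Injective ι ∧
    (∀ i : Fin m, v i ∈ F (ι i) ∧ v ⟨(i.val + 1) % m, Nat.mod_lt _ i.pos⟩ ∈ F (ι i)) ∧
    ∀ i : Fin m, (Finset.univ.filter fun j : Fin m => v j ∈ F (ι i)).card ≤ 2

private lemma mod_add_inj {s x k l : ℕ} (hk : k < s) (hl : l < s)
    (h : (x + k) % s = (x + l) % s) : k = l := by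
  have h2 : k ≡ l [MOD s] := Nat.ModEq.add_left_cancel' x h
  rwa [Nat.ModEq, Nat.mod_eq_of_lt hk, Nat.mod_eq_of_lt hl] at h2

private lemma succ_mod_ne {s x : ℕ} (hs : 2 ≤ s) (hx : x < s) : (x + 1) % s ≠ x := by
  rcases Nat.lt_or_ge (x + 1) s with h | h
  · rw [Nat.mod_eq_of_lt h]; omega
  · have hxs : x + 1 = s := by omega
    rw [hxs, Nat.mod_self]; omega

private lemma arc {n s : ℕ} (hs0 : 0 < s) (F : Fin s → Finset (Fin n))
    (v : Fin s → Fin n) (ι : Fin s → Fin s)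
    (hv : Function.Injective v) (hι : Function.Injective ι)
    (hvi : ∀ i : Fin s, v i ∈ F (ι i) ∧ v ⟨(i.val + 1) % s, Nat.mod_lt _ i.pos⟩ ∈ F (ι i))
    (b : Fin s) (c m : ℕ) (hm : 3 ≤ m) (hc : 1 ≤ c) (hcm : c + m ≤ s + 1)
    (h1 : v ⟨(b.val + c) % s, Nat.mod_lt _ hs0⟩ ∈ F (ι b))
    (h2 : v ⟨(b.val + c + m - 1) % s, Nat.mod_lt _ hs0⟩ ∈ F (ι b)) :
    HasBergeCycle F m := by
  refine ⟨fun k => v ⟨(b.val + c + k.val) % s, Nat.mod_lt _ hs0⟩,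
          fun k => if k.val = m - 1 then ι b
            else ι ⟨(b.val + c + k.val) % s, Nat.mod_lt _ hs0⟩, ?_, ?_, ?_⟩
  · intro k l h
    have hval : (b.val + c + k.val) % s = (b.val + c + l.val) % s :=
      congrArg Fin.val (hv h)
    have hk := k.isLt; have hl := l.isLt
    exact Fin.ext (mod_add_inj (by omega) (by omega) hval)
  · intro k l h
    simp only at h
    have hk := k.isLt; have hl := l.isLt
    by_cases hkm : k.val = m - 1 <;> by_cases hlm : l.val = m - 1
    · exact Fin.ext (by omega)
    · exfalso
      rw [if_pos hkm, if_neg hlm] at h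
      have hval : b.val = (b.val + c + l.val) % s := congrArg Fin.val (hι h)
      have h0 : (b.val + 0) % s = (b.val + (c + l.val)) % s := by
        rw [Nat.add_zero, Nat.mod_eq_of_lt b.isLt,
            show b.val + (c + l.val) = b.val + c + l.val by omega]
        exact hval
      have := mod_add_inj (l := c + l.val) hs0 (by omega) h0
      omega
    · exfalso
      rw [if_neg hkm, if_pos hlm] at h
      have hval : (b.val + c + k.val) % s = b.val := congrArg Fin.val (hι h)
      have h0 : (b.val + (c + k.val)) % s = (b.val + 0) % s := by
        rw [Nat.add_zero, Nat.mod_eq_of_lt b.isLt,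
            show b.val + (c + k.val) = b.val + c + k.val by omega]
        exact hval
      have := mod_add_inj (k := c + k.val) (by omega) hs0 h0
      omega
    · rw [if_neg hkm, if_neg hlm] at h
      have hval : (b.val + c + k.val) % s = (b.val + c + l.val) % s :=
        congrArg Fin.val (hι h)
      exact Fin.ext (mod_add_inj (by omega) (by omega) hval)
  · intro k
    simp only
    have hk := k.isLt
    by_cases hkm : k.val = m - 1
    · constructor
      · rw [if_pos hkm,
            show (⟨(b.val + c + k.val) % s, Nat.mod_lt _ hs0⟩ : Fin s)
              = ⟨(b.val + c + m - 1) % s, Nat.mod_lt _ hs0⟩ from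
              Fin.ext (show (b.val + c + k.val) % s = (b.val + c + m - 1) % s by
                rw [hkm]; congr 1; omega)]
        exact h2
      · rw [if_pos hkm]
        have e0 : (k.val + 1) % m = 0 := by
          rw [show k.val + 1 = m by omega, Nat.mod_self]
        rw [show (⟨(b.val + c + (k.val + 1) % m) % s, Nat.mod_lt _ hs0⟩ : Fin s)
              = ⟨(b.val + c) % s, Nat.mod_lt _ hs0⟩ from
              Fin.ext (show (b.val + c + (k.val + 1) % m) % s = (b.val + c) % s by
                rw [e0, Nat.add_zero])]
        exact h1
    · constructor
      · rw [if_neg hkm]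
        exact (hvi _).1
      · rw [if_neg hkm]
        have e0 : (k.val + 1) % m = k.val + 1 := Nat.mod_eq_of_lt (by omega)
        have key := (hvi ⟨(b.val + c + k.val) % s, Nat.mod_lt _ hs0⟩).2
        rw [show (⟨(b.val + c + (k.val + 1) % m) % s, Nat.mod_lt _ hs0⟩ : Fin s)
              = ⟨((b.val + c + k.val) % s + 1) % s,
                  Nat.mod_lt _ (Fin.pos ⟨(b.val + c + k.val) % s, Nat.mod_lt _ hs0⟩)⟩ from
              Fin.ext (show (b.val + c + (k.val + 1) % m) % s
                  = ((b.val + c + k.val) % s + 1) % s by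
                rw [e0, Nat.mod_add_mod]; congr 1 <;> omega)]
        exact key

private lemma star {n s : ℕ} (hs : 4 ≤ s) (F : Fin s → Finset (Fin n))
    (v : Fin s → Fin n) (ι : Fin s → Fin s)
    (hv : Function.Injective v) (hι : Function.Injective ι)
    (hvi : ∀ i : Fin s, v i ∈ F (ι i) ∧ v ⟨(i.val + 1) % s, Nat.mod_lt _ i.pos⟩ ∈ F (ι i))
    (hnone : ∀ m, 3 ≤ m → m ≤ s - 1 → ¬ HasBergeCycle F m)
    (a b : Fin s) (hab : v a ∈ F (ι b)) : a = b ∨ a.val = (b.val + 1) % s := by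
  by_contra hcon
  push_neg at hcon
  obtain ⟨h1, h2⟩ := hcon
  have hs0 : 0 < s := by omega
  have ha := a.isLt; have hb := b.isLt
  set d := (a.val + s - b.val) % s with hdef
  have hd : (b.val + d) % s = a.val := by
    have e1 : (b.val + d) % s = (b.val + (a.val + s - b.val)) % s :=
      Nat.ModEq.add_left b.val (Nat.mod_modEq _ s)
    rw [e1, show b.val + (a.val + s - b.val) = a.val + s by omega,
        Nat.add_mod_right, Nat.mod_eq_of_lt ha]
  have hdlt : d < s := Nat.mod_lt _ hs0
  have hd0 : d ≠ 0 := by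
    intro h
    apply h1
    apply Fin.ext
    rw [← hd, h, Nat.add_zero, Nat.mod_eq_of_lt hb]
  have hd1 : d ≠ 1 := by
    intro h
    apply h2
    rw [← hd, h]
  rcases Nat.lt_or_ge d 3 with hd3 | hd3
  · have hd2 : d = 2 := by omega
    refine hnone (s - 1) (by omega) (by omega)
      (arc hs0 F v ι hv hι hvi b 2 (s - 1) (by omega) (by omega) (by omega) ?_ ?_)
    · rw [show (⟨(b.val + 2) % s, Nat.mod_lt _ hs0⟩ : Fin s) = a from
        Fin.ext (show (b.val + 2) % s = a.val by rw [← hd2]; exact hd)]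
      exact hab
    · rw [show (⟨(b.val + 2 + (s - 1) - 1) % s, Nat.mod_lt _ hs0⟩ : Fin s) = b from
        Fin.ext (show (b.val + 2 + (s - 1) - 1) % s = b.val by
          rw [show b.val + 2 + (s - 1) - 1 = b.val + s by omega,
            Nat.add_mod_right, Nat.mod_eq_of_lt hb])]
      exact (hvi b).1
  · refine hnone d hd3 (by omega)
      (arc hs0 F v ι hv hι hvi b 1 d hd3 (by omega) (by omega) ?_ ?_)
    · exact (hvi b).2
    · rw [show (⟨(b.val + 1 + d - 1) % s, Nat.mod_lt _ hs0⟩ : Fin s) = a from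
        Fin.ext (show (b.val + 1 + d - 1) % s = a.val by
          rw [show b.val + 1 + d - 1 = b.val + d by omega]; exact hd)]
      exact hab

private lemma chord {n s : ℕ} (hs : 4 ≤ s) (F : Fin s → Finset (Fin n))
    (v : Fin s → Fin n) (ι : Fin s → Fin s)
    (hv : Function.Injective v) (hι : Function.Injective ι)
    (hvi : ∀ i : Fin s, v i ∈ F (ι i) ∧ v ⟨(i.val + 1) % s, Nat.mod_lt _ i.pos⟩ ∈ F (ι i))
    (hnone : ∀ m, 3 ≤ m → m ≤ s - 1 → ¬ HasBergeCycle F m)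
    (i j : Fin s) (hij : i ≠ j) (hij1 : (i.val + 1) % s ≠ j.val)
    (hji1 : (j.val + 1) % s ≠ i.val)
    (hcap : (F (ι i) ∩ F (ι j)).Nonempty) : False := by
  obtain ⟨w, hw⟩ := hcap
  rw [Finset.mem_inter] at hw
  have hs0 : 0 < s := by omega
  have hi := i.isLt; have hj := j.isLt
  have hwv : ∀ t, v t ≠ w := by
    intro t ht
    have g1 := star hs F v ι hv hι hvi hnone t i (ht ▸ hw.1)
    have g2 := star hs F v ι hv hι hvi hnone t j (ht ▸ hw.2)
    rcases g1 with g1 | g1 <;> rcases g2 with g2 | g2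
    · exact hij (g1 ▸ g2)
    · exact hji1 (by rw [← g2, g1])
    · exact hij1 (by rw [← g1, g2])
    · apply hij
      have hval : (1 + i.val) % s = (1 + j.val) % s := by
        rw [Nat.add_comm 1 i.val, Nat.add_comm 1 j.val, ← g1, ← g2]
      exact Fin.ext (mod_add_inj hi hj hval)
  set d := (j.val + s - i.val) % s with hdef
  have hd : (i.val + d) % s = j.val := by
    have e1 : (i.val + d) % s = (i.val + (j.val + s - i.val)) % s :=
      Nat.ModEq.add_left i.val (Nat.mod_modEq _ s)
    rw [e1, show i.val + (j.val + s - i.val) = j.val + s by omega,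
        Nat.add_mod_right, Nat.mod_eq_of_lt hj]
  have hdlt : d < s := Nat.mod_lt _ hs0
  have hd0 : d ≠ 0 := by
    intro h
    apply hij
    apply Fin.ext
    rw [← hd, h, Nat.add_zero, Nat.mod_eq_of_lt hi]
  have hd1 : d ≠ 1 := by
    intro h
    apply hij1
    rw [← hd, h]
  have hds : d ≠ s - 1 := by
    intro h
    apply hji1
    rw [← hd, Nat.mod_add_mod, show i.val + d + 1 = i.val + s by omega,
        Nat.add_mod_right, Nat.mod_eq_of_lt hi]
  apply hnone (d + 1) (by omega) (by omega)
  refine ⟨fun k => if k.val = 0 then w else v ⟨(i.val + k.val) % s, Nat.mod_lt _ hs0⟩,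
          fun k => ι ⟨(i.val + k.val) % s, Nat.mod_lt _ hs0⟩, ?_, ?_, ?_⟩
  · intro k l h
    simp only at h
    have hk := k.isLt; have hl := l.isLt
    by_cases hk0 : k.val = 0 <;> by_cases hl0 : l.val = 0
    · exact Fin.ext (by omega)
    · exfalso; rw [if_pos hk0, if_neg hl0] at h; exact hwv _ h.symm
    · exfalso; rw [if_neg hk0, if_pos hl0] at h; exact hwv _ h
    · rw [if_neg hk0, if_neg hl0] at h
      have hval : (i.val + k.val) % s = (i.val + l.val) % s := congrArg Fin.val (hv h)
      exact Fin.ext (mod_add_inj (by omega) (by omega) hval)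
  · intro k l h
    simp only at h
    have hk := k.isLt; have hl := l.isLt
    have hval : (i.val + k.val) % s = (i.val + l.val) % s := congrArg Fin.val (hι h)
    exact Fin.ext (mod_add_inj (by omega) (by omega) hval)
  · intro k
    simp only
    have hk := k.isLt
    by_cases hk0 : k.val = 0
    · have hidx : (⟨(i.val + k.val) % s, Nat.mod_lt _ hs0⟩ : Fin s) = i :=
        Fin.ext (show (i.val + k.val) % s = i.val by
          rw [hk0, Nat.add_zero, Nat.mod_eq_of_lt hi])
      constructor
      · rw [if_pos hk0, hidx]; exact hw.1
      · have e0 : (k.val + 1) % (d + 1) = 1 := by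
          rw [hk0]; exact Nat.mod_eq_of_lt (by omega)
        rw [if_neg (by rw [e0]; omega : ¬((k.val + 1) % (d + 1) = 0)), hidx]
        rw [show (⟨(i.val + (k.val + 1) % (d + 1)) % s, Nat.mod_lt _ hs0⟩ : Fin s)
              = ⟨(i.val + 1) % s, Nat.mod_lt _ i.pos⟩ from
              Fin.ext (show (i.val + (k.val + 1) % (d + 1)) % s = (i.val + 1) % s by
                rw [e0])]
        exact (hvi i).2
    · constructor
      · rw [if_neg hk0]
        exact (hvi _).1
      · by_cases hkd : k.val = d
        · have e0 : (k.val + 1) % (d + 1) = 0 := by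
            rw [hkd, Nat.mod_self]
          rw [if_pos e0]
          rw [show (⟨(i.val + k.val) % s, Nat.mod_lt _ hs0⟩ : Fin s) = j from
            Fin.ext (show (i.val + k.val) % s = j.val by rw [hkd]; exact hd)]
          exact hw.2
        · have e0 : (k.val + 1) % (d + 1) = k.val + 1 := Nat.mod_eq_of_lt (by omega)
          rw [if_neg (by rw [e0]; omega : ¬((k.val + 1) % (d + 1) = 0))]
          have key := (hvi ⟨(i.val + k.val) % s, Nat.mod_lt _ hs0⟩).2
          rw [show (⟨(i.val + (k.val + 1) % (d + 1)) % s, Nat.mod_lt _ hs0⟩ : Fin s)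
                = ⟨((i.val + k.val) % s + 1) % s,
                    Nat.mod_lt _ (Fin.pos ⟨(i.val + k.val) % s, Nat.mod_lt _ hs0⟩)⟩ from
                Fin.ext (show (i.val + (k.val + 1) % (d + 1)) % s
                    = ((i.val + k.val) % s + 1) % s by
                  rw [e0, Nat.mod_add_mod]; congr 1 <;> omega)]
          exact key

/-- Let `Δ` be a connected simplicial complex which is not a cone, with `s ≥ 4`
distinct facets, admitting a Berge cycle of length `s` but no Berge cycle of
length `k` for `3 ≤ k ≤ s - 1`.  Then `Δ` is a linear cycle: its line graph is a
cycle graph on `s` vertices. -/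
theorem stmt13 {n s : ℕ} (hs : 4 ≤ s) (F : Fin s → Finset (Fin n))
    (hinj : Function.Injective F)
    (hfacets : ∀ i j : Fin s, i ≠ j → ¬ F i ⊆ F j)
    (hconn : (lineGraph F).Connected)
    (hnotcone : ¬ ∃ v : Fin n, ∀ i : Fin s, v ∈ F i)
    (hbig : HasBergeCycle F s)
    (hnone : ∀ m, 3 ≤ m → m ≤ s - 1 → ¬ HasBergeCycle F m) :
    ∃ e : Fin s ≃ Fin s, ∀ i j : Fin s,
      (lineGraph F).Adj (e i) (e j) ↔
        ((i.val + 1) % s = j.val ∨ (j.val + 1) % s = i.val) := by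
  obtain ⟨v, ι, hv, hι, hvi⟩ := hbig
  have hs0 : 0 < s := by omega
  refine ⟨Equiv.ofBijective ι (Finite.injective_iff_bijective.mp hι), fun i j => ?_⟩
  simp only [Equiv.ofBijective_apply]
  constructor
  · intro hadj
    obtain ⟨hne, hcap⟩ : ι i ≠ ι j ∧ (F (ι i) ∩ F (ι j)).Nonempty := hadj
    by_contra hcon
    push_neg at hcon
    exact chord hs F v ι hv hι hvi hnone i j (fun h => hne (congrArg ι h))
      hcon.1 hcon.2 hcap
  · intro hcon
    rcases hcon with h | h
    · refine ⟨fun he => ?_, ⟨v j, Finset.mem_inter.mpr ⟨?_, (hvi j).1⟩⟩⟩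
      · have hij : i = j := hι he
        exact succ_mod_ne (by omega) i.isLt (hij ▸ h)
      · rw [show j = ⟨(i.val + 1) % s, Nat.mod_lt _ i.pos⟩ from (Fin.ext h).symm]
        exact (hvi i).2
    · refine ⟨fun he => ?_, ⟨v i, Finset.mem_inter.mpr ⟨(hvi i).1, ?_⟩⟩⟩
      · have hij : j = i := (hι he).symm
        exact succ_mod_ne (by omega) j.isLt (hij ▸ h)
      · rw [show i = ⟨(j.val + 1) % s, Nat.mod_lt _ j.pos⟩ from (Fin.ext h).symm]
        exact (hvi j).2
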